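/- Assume J : ℝ^l × ℝ^d → ℝ^d is measurable and p ↦ J(y,p) is continuous for each y ∈ ℝ^l, and let ρ_τ and ρ_ξ be probability densities on (0,∞) and ℝ^l respectively. Then for every open set O ⊆ L = ℝ^{2n}, the function ψ ↦ P(ψ,O) = ∫_0^∞ ∫_{ℝ^l} 1_O(J_L(y; e^{tA}ψ)) ρ_ξ(y) ρ_τ(t) dy dt is lower semicontinuous on L (the weak Feller property). -/

import Mathlib

open Matrix MeasureTheory

/-- Index for the coordinates of one block (particle `i`, component `j`). -/
abbrev PIdx (N d : ℕ) := Fin N × Fin d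

/-- The phase space `L = ℝ^{2n}`, `n = dN`: positions indexed by `Sum.inl`, momenta by
`Sum.inr`. -/
abbrev Phase (N d : ℕ) := (PIdx N d ⊕ PIdx N d) → ℝ

/-- The Hamiltonian matrix `A = [[0, (1/M)I], [−V, 0]]`. -/
noncomputable def hamMatrix {N d : ℕ} (M : ℝ) (V : Matrix (PIdx N d) (PIdx N d) ℝ) :
    Matrix (PIdx N d ⊕ PIdx N d) (PIdx N d ⊕ PIdx N d) ℝ :=
  Matrix.fromBlocks 0 ((1 / M) • 1) (-V) 0

/-- The momentum `p₁ ∈ ℝ^d` of particle 1. -/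
def mom1 {N d : ℕ} (hN : 0 < N) (ψ : Phase N d) : Fin d → ℝ :=
  fun j => ψ (Sum.inr ((⟨0, hN⟩ : Fin N), j))

/-- The collision map on phase space: `J_L(u;(q,p)) = (q,p')` with `p'₁ = J(u,p₁)` and
`p'ᵢ = pᵢ` for `i > 1`. -/
def JL {N d l : ℕ} (hN : 0 < N) (J : (Fin l → ℝ) → (Fin d → ℝ) → (Fin d → ℝ))
    (u : Fin l → ℝ) (ψ : Phase N d) : Phase N d := fun z =>
  match z with
  | Sum.inl x => ψ (Sum.inl x)
  | Sum.inr x => if x.1 = (⟨0, hN⟩ : Fin N) then J u (mom1 hN ψ) x.2 else ψ (Sum.inr x)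

/-- The free flow `e^{tA}ψ`. -/
noncomputable def flow {N d : ℕ} (M : ℝ) (V : Matrix (PIdx N d) (PIdx N d) ℝ) (t : ℝ)
    (ψ : Phase N d) : Phase N d :=
  (NormedSpace.exp (t • hamMatrix M V)).mulVec ψ

/-!
For fixed noise `(t, y)` the map `ψ ↦ J_L(y; e^{tA}ψ)` is continuous, so the indicator of the
open set `O` composed with it is lower semicontinuous in `ψ`. Since phase space is first
countable, Fatou's lemma carries lower semicontinuity through a Lebesgue integral, and for
nonnegative integrable integrands the Bochner integral is the `toReal` of the Lebesgue one.
Applying this to the inner and then to the outer integral gives the claim; the inner integral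
lies in `[0, 1]`, so the densities dominate both integrands.
-/

open Filter ENNReal

section Semicontinuity

variable {X α Y : Type*} [TopologicalSpace X] [MeasurableSpace α] {μ : Measure α}
  [MeasurableSpace Y] {O : Set Y} {ρ : α → ℝ}

theorem LowerSemicontinuous.toReal_of_ne_top {g : X → ℝ≥0∞} (hg : LowerSemicontinuous g)
    (hg_top : ∀ x, g x ≠ ∞) : LowerSemicontinuous fun x => (g x).toReal := by
  intro x c hc
  rcases lt_or_ge c 0 with hc0 | hc0
  · exact Eventually.of_forall fun _ => hc0.trans_le toReal_nonneg
  · filter_upwards [hg x _ ((ofReal_lt_iff_lt_toReal hc0 (hg_top x)).2 hc)] with y hy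
    exact (ofReal_lt_iff_lt_toReal hc0 (hg_top y)).1 hy

theorem LowerSemicontinuous.mul_const_of_nonneg {f : X → ℝ} (hf : LowerSemicontinuous f)
    {c : ℝ} (hc : 0 ≤ c) : LowerSemicontinuous fun x => f x * c :=
  (continuous_mul_const c).comp_lowerSemicontinuous hf fun _ _ h => mul_le_mul_of_nonneg_right h hc

theorem integrable_indicator_comp_mul {Φ : α → Y} (hO : MeasurableSet O) (hΦ : Measurable Φ)
    (hρ_int : Integrable ρ μ) :
    Integrable (fun a => O.indicator (fun _ => (1 : ℝ)) (Φ a) * ρ a) μ :=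
  hρ_int.bdd_mul ((measurable_const.indicator hO).comp hΦ).aestronglyMeasurable
    (.of_forall fun _ => (norm_indicator_le_norm_self _ _).trans norm_one.le)

theorem integral_indicator_comp_mul_mem_Icc {Φ : α → Y} (hO : MeasurableSet O)
    (hΦ : Measurable Φ) (hρ_nonneg : ∀ a, 0 ≤ ρ a) (hρ_int : Integrable ρ μ) :
    ∫ a, O.indicator (fun _ => (1 : ℝ)) (Φ a) * ρ a ∂μ ∈ Set.Icc 0 (∫ a, ρ a ∂μ) :=
  ⟨integral_nonneg fun a => mul_nonneg (Set.indicator_nonneg (fun _ _ => zero_le_one) _)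
    (hρ_nonneg a),
   integral_mono (integrable_indicator_comp_mul hO hΦ hρ_int) hρ_int fun a =>
    mul_le_of_le_one_left (hρ_nonneg a) (Set.indicator_le_self' (fun _ _ => zero_le_one) (Φ a))⟩

variable [FirstCountableTopology X] [TopologicalSpace Y] [OpensMeasurableSpace Y]

theorem lowerSemicontinuous_lintegral {F : X → α → ℝ≥0∞}
    (hF : ∀ a, LowerSemicontinuous fun x => F x a) (hF_meas : ∀ x, AEMeasurable (F x) μ) :
    LowerSemicontinuous fun x => ∫⁻ a, F x a ∂μ :=
  lowerSemicontinuous_iff_le_liminf.2 fun x =>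
    (lintegral_mono fun a => (hF a).le_liminf x).trans (lintegral_liminf_le' hF_meas)

theorem lowerSemicontinuous_integral_of_nonneg {F : X → α → ℝ}
    (hF : ∀ a, LowerSemicontinuous fun x => F x a) (hF_nonneg : ∀ x a, 0 ≤ F x a)
    (hF_int : ∀ x, Integrable (F x) μ) : LowerSemicontinuous fun x => ∫ a, F x a ∂μ := by
  have hF_eq : ∀ x, ∫ a, F x a ∂μ = (∫⁻ a, ENNReal.ofReal (F x a) ∂μ).toReal := fun x =>
    integral_eq_lintegral_of_nonneg_ae (.of_forall (hF_nonneg x)) (hF_int x).1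
  simp_rw [hF_eq]
  refine LowerSemicontinuous.toReal_of_ne_top ?_ fun x => (hF_int x).lintegral_lt_top.ne
  exact lowerSemicontinuous_lintegral
    (fun a => ENNReal.continuous_ofReal.comp_lowerSemicontinuous (hF a) ENNReal.ofReal_mono)
    fun x => (hF_int x).1.aemeasurable.ennreal_ofReal

theorem lowerSemicontinuous_integral_indicator_comp_mul {Φ : X → α → Y} (hO : IsOpen O)
    (hΦ : ∀ a, Continuous fun x => Φ x a) (hΦ_meas : ∀ x, Measurable (Φ x))
    (hρ_nonneg : ∀ a, 0 ≤ ρ a) (hρ_int : Integrable ρ μ) :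
    LowerSemicontinuous fun x => ∫ a, O.indicator (fun _ => (1 : ℝ)) (Φ x a) * ρ a ∂μ :=
  lowerSemicontinuous_integral_of_nonneg
    (fun a => ((hO.lowerSemicontinuous_indicator zero_le_one).comp (hΦ a)).mul_const_of_nonneg
      (hρ_nonneg a))
    (fun _ a => mul_nonneg (Set.indicator_nonneg (fun _ _ => zero_le_one) _) (hρ_nonneg a))
    fun x => integrable_indicator_comp_mul hO.measurableSet (hΦ_meas x) hρ_int

end Semicontinuity

theorem Matrix.continuous_exp {ι : Type*} [Fintype ι] [DecidableEq ι] :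
    Continuous (NormedSpace.exp : Matrix ι ι ℝ → Matrix ι ι ℝ) := by
  let _ := Matrix.linftyOpNormedRing (n := ι) (α := ℝ)
  let _ := Matrix.linftyOpNormedAlgebra (n := ι) (R := ℝ) (α := ℝ)
  exact AnalyticOnNhd.continuous fun x _ => NormedSpace.exp_analytic (𝕂 := ℝ) x

section Phase

variable {N d l : ℕ}

theorem continuous_flow_uncurry (M : ℝ) (V : Matrix (PIdx N d) (PIdx N d) ℝ) :
    Continuous fun p : ℝ × Phase N d => flow M V p.1 p.2 :=
  (Matrix.continuous_exp.comp (continuous_fst.smul continuous_const)).matrix_mulVec continuous_snd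

theorem continuous_JL (hN : 0 < N) (J : (Fin l → ℝ) → (Fin d → ℝ) → (Fin d → ℝ))
    (hJ : ∀ u, Continuous (J u)) (u : Fin l → ℝ) : Continuous (JL (N := N) hN J u) := by
  refine continuous_pi fun z => ?_
  rcases z with x | x
  · exact continuous_apply _
  · by_cases hx : x.1 = ⟨0, hN⟩
    · simp only [JL, hx, if_true]
      exact (continuous_apply x.2).comp ((hJ u).comp (continuous_pi fun _ => continuous_apply _))
    · simp only [JL, hx, if_false]
      exact continuous_apply _

theorem measurable_JL_uncurry (hN : 0 < N) (J : (Fin l → ℝ) → (Fin d → ℝ) → (Fin d → ℝ))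
    (hJ : Measurable fun y : (Fin l → ℝ) × (Fin d → ℝ) => J y.1 y.2) :
    Measurable fun p : (Fin l → ℝ) × Phase N d => JL hN J p.1 p.2 := by
  refine measurable_pi_lambda _ fun z => ?_
  rcases z with x | x
  · exact (measurable_pi_apply _).comp measurable_snd
  · by_cases hx : x.1 = ⟨0, hN⟩
    · simp only [JL, hx, if_true]
      exact (measurable_pi_apply x.2).comp (hJ.comp (measurable_fst.prodMk
        (measurable_pi_lambda _ fun _ => (measurable_pi_apply _).comp measurable_snd)))
    · simp only [JL, hx, if_false]
      exact (measurable_pi_apply _).comp measurable_snd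

theorem continuous_JL_flow (hN : 0 < N) (J : (Fin l → ℝ) → (Fin d → ℝ) → (Fin d → ℝ))
    (hJ : ∀ u, Continuous (J u)) (M : ℝ) (V : Matrix (PIdx N d) (PIdx N d) ℝ) (t : ℝ)
    (y : Fin l → ℝ) : Continuous fun ψ : Phase N d => JL hN J y (flow M V t ψ) :=
  (continuous_JL hN J hJ y).comp
    ((continuous_flow_uncurry M V).comp (continuous_const.prodMk continuous_id))

theorem measurable_JL_flow (hN : 0 < N) (J : (Fin l → ℝ) → (Fin d → ℝ) → (Fin d → ℝ))
    (hJ : Measurable fun y : (Fin l → ℝ) × (Fin d → ℝ) => J y.1 y.2) (M : ℝ)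
    (V : Matrix (PIdx N d) (PIdx N d) ℝ) (ψ : Phase N d) :
    Measurable fun p : ℝ × (Fin l → ℝ) => JL hN J p.2 (flow M V p.1 ψ) :=
  (measurable_JL_uncurry hN J hJ).comp (measurable_snd.prodMk
    ((continuous_flow_uncurry M V).comp (continuous_fst.prodMk continuous_const)).measurable)

end Phase

theorem weak_feller_general (N d l : ℕ) (hN : 0 < N) (M : ℝ)
    (V : Matrix (PIdx N d) (PIdx N d) ℝ)
    (J : (Fin l → ℝ) → (Fin d → ℝ) → (Fin d → ℝ))
    (hJmeas : Measurable fun y : (Fin l → ℝ) × (Fin d → ℝ) => J y.1 y.2)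
    (hJcont : ∀ y, Continuous (J y))
    (ρτ : ℝ → ℝ) (hρτ0 : ∀ t, 0 ≤ ρτ t)
    (hρτint : ∫ t in Set.Ioi (0 : ℝ), ρτ t = 1)
    (ρξ : (Fin l → ℝ) → ℝ) (hρξmeas : Measurable ρξ) (hρξ0 : ∀ y, 0 ≤ ρξ y)
    (hρξint : ∫ y, ρξ y = 1) :
    ∀ O : Set (Phase N d), IsOpen O →
      LowerSemicontinuous fun ψ : Phase N d =>
        ∫ t in Set.Ioi (0 : ℝ),
          (∫ y, Set.indicator O (fun _ => (1 : ℝ)) (JL hN J y (flow M V t ψ)) * ρξ y) * ρτ t := by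
  intro O hO
  have hρξ_int : Integrable ρξ := Integrable.of_integral_ne_zero (by simp [hρξint])
  have hρτ_int : IntegrableOn ρτ (Set.Ioi 0) := Integrable.of_integral_ne_zero (by simp [hρτint])
  have hΦ_meas (ψ : Phase N d) := measurable_JL_flow hN J hJmeas M V ψ
  have h_inner_mem (ψ : Phase N d) (t : ℝ) :
      ∫ y, O.indicator (fun _ => (1 : ℝ)) (JL hN J y (flow M V t ψ)) * ρξ y ∈ Set.Icc 0 1 :=
    hρξint ▸ integral_indicator_comp_mul_mem_Icc hO.measurableSet
      ((hΦ_meas ψ).comp measurable_prodMk_left) hρξ0 hρξ_int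
  have h_inner_lsc (t : ℝ) : LowerSemicontinuous fun ψ : Phase N d =>
      ∫ y, O.indicator (fun _ => (1 : ℝ)) (JL hN J y (flow M V t ψ)) * ρξ y :=
    lowerSemicontinuous_integral_indicator_comp_mul hO (continuous_JL_flow hN J hJcont M V t)
      (fun ψ => (hΦ_meas ψ).comp measurable_prodMk_left) hρξ0 hρξ_int
  refine lowerSemicontinuous_integral_of_nonneg
    (fun t => (h_inner_lsc t).mul_const_of_nonneg (hρτ0 t))
    (fun ψ t => mul_nonneg (h_inner_mem ψ t).1 (hρτ0 t)) fun ψ => ?_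
  refine hρτ_int.bdd_mul (c := 1) ?_ (.of_forall fun t => ?_)
  · exact ((((measurable_const.indicator hO.measurableSet).comp (hΦ_meas ψ)).mul
      (hρξmeas.comp measurable_snd)).stronglyMeasurable.integral_prod_right').aestronglyMeasurable
  · rw [Real.norm_of_nonneg (h_inner_mem ψ t).1]
    exact (h_inner_mem ψ t).2

/-- Weak Feller property of the embedded chain: for every open `O ⊆ L`, the function
`ψ ↦ P(ψ,O) = ∫_0^∞ ∫ 1_O(J_L(y; e^{tA}ψ)) ρ_ξ(y) ρ_τ(t) dy dt` is lower semicontinuous. -/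
theorem weak_feller (N d l : ℕ) (hN : 0 < N) (hd : 0 < d) (M : ℝ) (hM : 0 < M)
    (V : Matrix (PIdx N d) (PIdx N d) ℝ) (hV : V.PosDef)
    (J : (Fin l → ℝ) → (Fin d → ℝ) → (Fin d → ℝ))
    (hJmeas : Measurable fun y : (Fin l → ℝ) × (Fin d → ℝ) => J y.1 y.2)
    (hJcont : ∀ y, Continuous (J y))
    (ρτ : ℝ → ℝ) (hρτmeas : Measurable ρτ) (hρτ0 : ∀ t, 0 ≤ ρτ t)
    (hρτint : ∫ t in Set.Ioi (0 : ℝ), ρτ t = 1)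
    (ρξ : (Fin l → ℝ) → ℝ) (hρξmeas : Measurable ρξ) (hρξ0 : ∀ y, 0 ≤ ρξ y)
    (hρξint : ∫ y, ρξ y = 1) :
    ∀ O : Set (Phase N d), IsOpen O →
      LowerSemicontinuous fun ψ : Phase N d =>
        ∫ t in Set.Ioi (0 : ℝ),
          (∫ y, Set.indicator O (fun _ => (1 : ℝ)) (JL hN J y (flow M V t ψ)) * ρξ y) * ρτ t :=
  weak_feller_general N d l hN M V J hJmeas hJcont ρτ hρτ0 hρτint ρξ hρξmeas hρξ0 hρξint
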